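/- Steerable self-attention is equivariant: let ρ(R) be unitary, let the input transform as f^in(x_i, ρ) ↦ ρ(R) f^in(Rx_i + t, ρ) and positional encoding satisfy P(x, ρ) ↦ ρ(R)P(Rx, ρ). With queries q_i = f^in(x_i)W_Q, keys k_{ij} = f^in(x_i)W_K + P(x_i − x_j), values v_i = f^in(x_i)W_V, scores s_{ij} = Σ_ρ' w_{ρρ'} q_i† k_{ij} / √d_K, attention α_{ij} = exp(|s_{ij}|)/Σ_{j'} exp(|s_{ij'}|), and output f^out(x_i, ρ) = Σ_j α_{ij} v_j, the output transforms as f^out(x_i, ρ) ↦ ρ(R) f^out(Rx_i + t, ρ). -/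

import Mathlib

open Matrix

/-! Every attention score is a combination of Frobenius products `q_iᴴ k_ij`. After the motion
both factors are multiplied on the left by the same unitary `ρ(R)` (the translation cancels in the
relative position `x_i - x_j`), so these products, and with them the attention weights, are
unchanged. The output is then the same weighted sum of the values `ρ(R) f^in(R x_j + t) W_V`,
from which `ρ(R)` factors out. -/

namespace Matrix

variable {m n R : Type*} [Fintype m] [Fintype n] [CommSemiring R] [StarRing R]

theorem sum_sum_star_mul_eq_trace_conjTranspose_mul (A B : Matrix m n R) :
    ∑ a, ∑ b, starRingEnd R (A a b) * B a b = (Aᴴ * B).trace := by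
  rw [Finset.sum_comm]
  simp only [trace, diag_apply, mul_apply, conjTranspose_apply, starRingEnd_apply]

theorem sum_sum_star_mul_mul_left_of_conjTranspose_mul_eq_one [DecidableEq m] {U : Matrix m m R}
    (hU : Uᴴ * U = 1) (A B : Matrix m n R) :
    ∑ a, ∑ b, starRingEnd R ((U * A) a b) * (U * B) a b
      = ∑ a, ∑ b, starRingEnd R (A a b) * B a b := by
  rw [sum_sum_star_mul_eq_trace_conjTranspose_mul, sum_sum_star_mul_eq_trace_conjTranspose_mul,
    conjTranspose_mul, Matrix.mul_assoc, ← Matrix.mul_assoc Uᴴ, hU, Matrix.one_mul]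

end Matrix

theorem stmt9_general
    (d N C dK dV : ℕ) (I : Type) [Fintype I] (dm : I → ℕ)
    -- the input feature field and positional encoding (one component per irrep ρ ∈ I)
    (f : (Fin d → ℝ) → (r : I) → Matrix (Fin (dm r)) (Fin C) ℂ)
    (P : (Fin d → ℝ) → (r : I) → Matrix (Fin (dm r)) (Fin dK) ℂ)
    -- the learnable matrices, mixing scalars, and grid points
    (WQ WK : Matrix (Fin C) (Fin dK) ℂ) (WV : Matrix (Fin C) (Fin dV) ℂ)
    (w : I → I → ℂ)
    (x : Fin N → Fin d → ℝ)
    -- the rigid motion (t, R) ∈ SE(d), with ρ(R) = U r unitary for each irrep r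
    (R : Matrix (Fin d) (Fin d) ℝ) (t : Fin d → ℝ)
    (U : (r : I) → Matrix (Fin (dm r)) (Fin (dm r)) ℂ)
    (hU : ∀ r, (U r)ᴴ * U r = 1)
    -- the transformed input field and positional encoding
    (f' : (Fin d → ℝ) → (r : I) → Matrix (Fin (dm r)) (Fin C) ℂ)
    (hf' : ∀ y r, f' y r = U r * f (R.mulVec y + t) r)
    (P' : (Fin d → ℝ) → (r : I) → Matrix (Fin (dm r)) (Fin dK) ℂ)
    (hP' : ∀ z r, P' z r = U r * P (R.mulVec z) r)
    -- the steerable self-attention output, as a function of field, encoding and grid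
    (Fout : ((Fin d → ℝ) → (r : I) → Matrix (Fin (dm r)) (Fin C) ℂ) →
            ((Fin d → ℝ) → (r : I) → Matrix (Fin (dm r)) (Fin dK) ℂ) →
            (Fin N → Fin d → ℝ) → Fin N → (r : I) → Matrix (Fin (dm r)) (Fin dV) ℂ)
    (hFout : ∀ g Q y i r,
      Fout g Q y i r =
        ∑ j : Fin N,
          ((Real.exp ‖
              ((∑ r' : I, w r r' *
                  ∑ a, ∑ b, (starRingEnd ℂ) ((g (y i) r' * WQ) a b) *
                    ((g (y i) r' * WK + Q (y i - y j) r') a b)) / (Real.sqrt dK : ℂ))‖ /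
            ∑ j' : Fin N, Real.exp ‖
              ((∑ r' : I, w r r' *
                  ∑ a, ∑ b, (starRingEnd ℂ) ((g (y i) r' * WQ) a b) *
                    ((g (y i) r' * WK + Q (y i - y j') r') a b)) / (Real.sqrt dK : ℂ))‖ : ℝ) : ℂ) •
            (g (y j) r * WV)) :
    ∀ i r, Fout f' P' x i r = U r * Fout f P (fun j => R.mulVec (x j) + t) i r := by
  intro i r
  set y : Fin N → Fin d → ℝ := fun j => R.mulVec (x j) + t
  have hscore : ∀ j r',
      ∑ a, ∑ b, starRingEnd ℂ ((f' (x i) r' * WQ) a b) *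
          ((f' (x i) r' * WK + P' (x i - x j) r') a b)
        = ∑ a, ∑ b, starRingEnd ℂ ((f (y i) r' * WQ) a b) *
          ((f (y i) r' * WK + P (y i - y j) r') a b) := by
    intro j r'
    have hdiff : y i - y j = R.mulVec (x i - x j) := by
      simp only [y, add_sub_add_right_eq_sub, mulVec_sub]
    rw [hf', hP', hdiff, Matrix.mul_assoc, Matrix.mul_assoc, ← Matrix.mul_add,
      sum_sum_star_mul_mul_left_of_conjTranspose_mul_eq_one (hU r')]
  rw [hFout, hFout, Matrix.mul_sum]
  refine Finset.sum_congr rfl fun j _ => ?_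
  simp only [hscore]
  rw [Matrix.mul_smul, hf', Matrix.mul_assoc]

/-- Proposition 1 (steerable self-attention is equivariant): if the input field transforms as
f^in(x,ρ) ↦ ρ(R) f^in(Rx + t, ρ) and the positional encoding as P(x,ρ) ↦ ρ(R) P(Rx, ρ), with
ρ(R) unitary, then the output of steerable self-attention (queries q_i = f^in(x_i)W_Q, keys
k_{ij} = f^in(x_i)W_K + P(x_i − x_j), values v_i = f^in(x_i)W_V, mixed scores
s_{ij} = Σ_{ρ'} w_{ρρ'} q_i† k_{ij} / √d_K, attention α_{ij} = exp(|s_{ij}|)/Σ_{j'} exp(|s_{ij'}|),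
output f^out(x_i,ρ) = Σ_j α_{ij} v_j) transforms as f^out(x_i,ρ) ↦ ρ(R) f^out(Rx_i + t, ρ). -/
theorem stmt9
    (d N C dK dV : ℕ) (I : Type) [Fintype I] (dm : I → ℕ)
    -- the input feature field and positional encoding (one component per irrep ρ ∈ I)
    (f : (Fin d → ℝ) → (r : I) → Matrix (Fin (dm r)) (Fin C) ℂ)
    (P : (Fin d → ℝ) → (r : I) → Matrix (Fin (dm r)) (Fin dK) ℂ)
    -- the learnable matrices, mixing scalars, and grid points
    (WQ WK : Matrix (Fin C) (Fin dK) ℂ) (WV : Matrix (Fin C) (Fin dV) ℂ)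
    (w : I → I → ℂ)
    (x : Fin N → Fin d → ℝ)
    -- the rigid motion (t, R) ∈ SE(d), with ρ(R) = U r unitary for each irrep r
    (R : Matrix (Fin d) (Fin d) ℝ) (t : Fin d → ℝ)
    (hR : Rᵀ * R = 1 ∧ R.det = 1)
    (U : (r : I) → Matrix (Fin (dm r)) (Fin (dm r)) ℂ)
    (hU : ∀ r, (U r)ᴴ * U r = 1)
    -- the transformed input field and positional encoding
    (f' : (Fin d → ℝ) → (r : I) → Matrix (Fin (dm r)) (Fin C) ℂ)
    (hf' : ∀ y r, f' y r = U r * f (R.mulVec y + t) r)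
    (P' : (Fin d → ℝ) → (r : I) → Matrix (Fin (dm r)) (Fin dK) ℂ)
    (hP' : ∀ z r, P' z r = U r * P (R.mulVec z) r)
    -- the steerable self-attention output, as a function of field, encoding and grid
    (Fout : ((Fin d → ℝ) → (r : I) → Matrix (Fin (dm r)) (Fin C) ℂ) →
            ((Fin d → ℝ) → (r : I) → Matrix (Fin (dm r)) (Fin dK) ℂ) →
            (Fin N → Fin d → ℝ) → Fin N → (r : I) → Matrix (Fin (dm r)) (Fin dV) ℂ)
    (hFout : ∀ g Q y i r,
      Fout g Q y i r =
        ∑ j : Fin N,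
          ((Real.exp ‖
              ((∑ r' : I, w r r' *
                  ∑ a, ∑ b, (starRingEnd ℂ) ((g (y i) r' * WQ) a b) *
                    ((g (y i) r' * WK + Q (y i - y j) r') a b)) / (Real.sqrt dK : ℂ))‖ /
            ∑ j' : Fin N, Real.exp ‖
              ((∑ r' : I, w r r' *
                  ∑ a, ∑ b, (starRingEnd ℂ) ((g (y i) r' * WQ) a b) *
                    ((g (y i) r' * WK + Q (y i - y j') r') a b)) / (Real.sqrt dK : ℂ))‖ : ℝ) : ℂ) •
            (g (y j) r * WV)) :
    ∀ i r, Fout f' P' x i r = U r * Fout f P (fun j => R.mulVec (x j) + t) i r :=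
  stmt9_general d N C dK dV I dm f P WQ WK WV w x R t U hU f' hf' P' hP' Fout hFout
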